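/- Let G be a 2-connected finite loopless multigraph on n vertices. Then every complex root z of the all-terminal reliability polynomial Rel(G;q) satisfies |z| ≤ n − 1. -/

import Mathlib

open Polynomial

/-- A finite loopless multigraph: a finite vertex type, a finite edge type, and an
incidence map sending each edge to the (unordered) pair of its two distinct endpoints. -/
structure Multigraph where
  V : Type
  E : Type
  [fintypeV : Fintype V]
  [decEqV : DecidableEq V]
  [fintypeE : Fintype E]
  [decEqE : DecidableEq E]
  ends : E → Sym2 V
  loopless : ∀ e, ¬ (ends e).IsDiag

attribute [instance] Multigraph.fintypeV Multigraph.decEqV Multigraph.fintypeE Multigraph.decEqE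

namespace Multigraph

/-- The simple graph on `G.V` in which `x` and `y` are adjacent exactly when some edge
of the subset `S` joins them.  (A multigraph spanning subgraph `(V, S)` is connected
iff this simple graph is connected.) -/
def spanningGraph (G : Multigraph) (S : Set G.E) : SimpleGraph G.V where
  Adj x y := x ≠ y ∧ ∃ e ∈ S, G.ends e = s(x, y)
  symm := ⟨by
    rintro x y ⟨hxy, e, he, h⟩
    exact ⟨hxy.symm, e, he, by rw [h, Sym2.eq_swap]⟩⟩
  loopless := ⟨by rintro x ⟨hx, -⟩; exact hx rfl⟩

/-- Connectedness of a multigraph. -/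
def Connected (G : Multigraph) : Prop := (G.spanningGraph Set.univ).Connected

open scoped Classical in
/-- The all-terminal reliability polynomial of `G`, in the variable `q = X`:
`Rel(G;q) = Σ_{E' ⊆ E, (V,E') connected} (1-q)^{|E'|} q^{|E|-|E'|}`. -/
noncomputable def Rel (G : Multigraph) : Polynomial ℂ :=
  ∑ S : Finset G.E, if (G.spanningGraph ↑S).Connected then
    (1 - X) ^ S.card * X ^ (Fintype.card G.E - S.card) else 0

/-- The condition that the spanning subgraph `(V, S)` has exactly two connected
components, one containing `u` and the other containing `v`: equivalently, `u` and `v`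
cannot communicate, and every vertex can communicate with `u` or with `v`. -/
def SplitState (G : Multigraph) (u v : G.V) (S : Set G.E) : Prop :=
  ¬ (G.spanningGraph S).Reachable u v ∧
    ∀ w : G.V, (G.spanningGraph S).Reachable w u ∨ (G.spanningGraph S).Reachable w v

open scoped Classical in
/-- The `{u,v}`-split reliability polynomial of `G`, in the variable `q = X`. -/
noncomputable def spRel (G : Multigraph) (u v : G.V) : Polynomial ℂ :=
  ∑ S : Finset G.E, if G.SplitState u v ↑S then
    (1 - X) ^ S.card * X ^ (Fintype.card G.E - S.card) else 0

/-- The condition that every connected component of the spanning subgraph `(V, S)`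
contains exactly one vertex of `K`. -/
def SplitStateSet (G : Multigraph) (K : Set G.V) (S : Set G.E) : Prop :=
  ∀ w : G.V, ∃! x : G.V, x ∈ K ∧ (G.spanningGraph S).Reachable w x

open scoped Classical in
/-- The `K`-split reliability polynomial of `G`, in the variable `q = X`. -/
noncomputable def spRelSet (G : Multigraph) (K : Set G.V) : Polynomial ℂ :=
  ∑ S : Finset G.E, if G.SplitStateSet K ↑S then
    (1 - X) ^ S.card * X ^ (Fintype.card G.E - S.card) else 0

open scoped Classical in
/-- `F i` = the number of `i`-subsets of edges whose removal leaves `G` connected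
(the F-vector of the cographic matroid of `G`). -/
noncomputable def Fnum (G : Multigraph) (i : ℕ) : ℕ :=
  (Finset.univ.filter fun S : Finset G.E =>
    S.card = i ∧ (G.spanningGraph ↑(Finset.univ \ S)).Connected).card

/-- `G` is `k`-edge-connected: it is connected and remains connected after deleting
any set of fewer than `k` edges. -/
def EdgeConnected (G : Multigraph) (k : ℕ) : Prop :=
  G.Connected ∧ ∀ D : Finset G.E, D.card < k → (G.spanningGraph {e | e ∉ (D : Set G.E)}).Connected

/-- `G` is 2-connected: connected, at least 3 vertices, and deleting any single vertex
leaves it connected. -/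
def TwoConnected (G : Multigraph) : Prop :=
  G.Connected ∧ 3 ≤ Fintype.card G.V ∧
    ∀ v : G.V, ((G.spanningGraph Set.univ).induce {w : G.V | w ≠ v}).Connected

/-- The (induced) subgraph of `G` on a set `B` of vertices is connected and has no
cut vertex. -/
def NoCutVertex (G : Multigraph) (B : Set G.V) : Prop :=
  ((G.spanningGraph Set.univ).induce B).Connected ∧
    ∀ v ∈ B, ((G.spanningGraph Set.univ).induce (B \ {v})).Connected

/-- `B` is the vertex set of a block of `G`: a maximal subgraph with no cut vertex
(equivalently, a maximal 2-connected subgraph or a bridge together with its endpoints). -/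
def IsBlock (G : Multigraph) (B : Set G.V) : Prop :=
  G.NoCutVertex B ∧ ∀ C : Set G.V, B ⊆ C → G.NoCutVertex C → C = B

/-- Build a multigraph from a symmetric multiplicity function on unordered pairs. -/
def ofWeight (V : Type) [Fintype V] [DecidableEq V] (w : Sym2 V → ℕ)
    (hw : ∀ p : Sym2 V, p.IsDiag → w p = 0) : Multigraph where
  V := V
  E := Σ p : Sym2 V, Fin (w p)
  ends e := e.1
  loopless := by
    rintro ⟨p, i⟩ h
    rw [hw p h] at i
    exact i.elim0

/-- The complete graph on `n` vertices. -/
def completeGraph (n : ℕ) : Multigraph :=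
  ofWeight (Fin n) (fun p => if p.IsDiag then 0 else 1) (by intro p hp; simp [hp])

/-- `completeMinus n` is the complete graph on `n + 2` vertices minus the edge joining
the vertices `0` and `1`; that is, it is `K_{n+2}^-`, with `u = 0` and `v = 1` its
unique nonadjacent pair of vertices. -/
def completeMinus (n : ℕ) : Multigraph :=
  ofWeight (Fin (n + 2))
    (fun p => if p.IsDiag ∨ p = s((0 : Fin (n + 2)), 1) then 0 else 1)
    (by intro p hp; simp [hp])

/-- The multiplicity function of `G_{m,n}^{a,b}`: `a` parallel edges inside each part,
`b` parallel edges across, no loops. -/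
def gWeight (m n a b : ℕ) : Sym2 (Fin m ⊕ Fin n) → ℕ :=
  Sym2.lift ⟨fun x y => if x = y then 0 else if x.isLeft = y.isLeft then a else b, by
    intro x y
    by_cases h : x = y
    · simp [h]
    · have h' : y ≠ x := fun hh => h hh.symm
      have hl : (x.isLeft = y.isLeft) = (y.isLeft = x.isLeft) := propext ⟨Eq.symm, Eq.symm⟩
      simp only [if_neg h, if_neg h', hl]⟩

/-- The multigraph `G_{m,n}^{a,b}`: disjoint complete graphs `K_m` and `K_n` with each
edge replaced by `a` parallel edges, and every pair of vertices in different parts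
joined by `b` parallel edges. -/
def Gmnab (m n a b : ℕ) : Multigraph :=
  ofWeight (Fin m ⊕ Fin n) (gWeight m n a b) (by
    intro p hp
    induction p using Sym2.ind with
    | _ x y =>
      rw [Sym2.mk_isDiag_iff] at hp
      simp [gWeight, Sym2.lift_mk, hp])

/-- Replace every edge of `G` by a bundle of `k` parallel edges. -/
def bundle (G : Multigraph) (k : ℕ) : Multigraph where
  V := G.V
  E := G.E × Fin k
  ends e := G.ends e.1
  loopless e := G.loopless e.1

/-- The vertex map used in an edge substitution: the endpoints `u`, `v` of the gadget
are identified with the two ends (given by the orientation `ori`) of the edge `e`, and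
the internal vertices of the gadget get their own private copies. -/
def subVertex (G H : Multigraph) (u v : H.V) (ori : G.E → G.V × G.V) (e : G.E)
    (x : H.V) : G.V ⊕ (G.E × {x : H.V // x ≠ u ∧ x ≠ v}) :=
  if hx : x = u then Sum.inl (ori e).1
  else if hx' : x = v then Sum.inl (ori e).2
  else Sum.inr (e, ⟨x, hx, hx'⟩)

/-- The edge substitution `G[H(u,v)]` determined by the orientation `ori` of the edges
of `G`: every edge `{x,y}` of `G` is replaced by a copy of `H`, identifying `u` with
`x` and `v` with `y`. -/
def edgeSub (G H : Multigraph) (u v : H.V) (ori : G.E → G.V × G.V)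
    (hori : ∀ e, s((ori e).1, (ori e).2) = G.ends e) : Multigraph where
  V := G.V ⊕ (G.E × {x : H.V // x ≠ u ∧ x ≠ v})
  E := G.E × H.E
  ends f := (H.ends f.2).map (subVertex G H u v ori f.1)
  loopless := by
    rintro ⟨e, f⟩ h
    have hne : (ori e).1 ≠ (ori e).2 := by
      have hd := G.loopless e
      rw [← hori e, Sym2.mk_isDiag_iff] at hd
      exact hd
    have hinj : Function.Injective (subVertex G H u v ori e) := by
      intro x y hxy
      unfold subVertex at hxy
      split_ifs at hxy <;> simp_all
    rw [Sym2.isDiag_map hinj] at h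
    exact H.loopless f h

/-- The disjoint union of a finite family of multigraphs. -/
def disjUnion {k : ℕ} (H : Fin k → Multigraph) : Multigraph where
  V := Σ i, (H i).V
  E := Σ i, (H i).E
  ends e := ((H e.1).ends e.2).map (Sigma.mk e.1)
  loopless := by
    rintro ⟨i, e⟩ h
    rw [Sym2.isDiag_map sigma_mk_injective] at h
    exact (H i).loopless e h

end Multigraph

namespace Multigraph

/-- The first vertex (`u`) of the unique nonadjacent pair of `completeMinus n`. -/
def cmU (n : ℕ) : (completeMinus n).V := (0 : Fin (n + 2))

/-- The second vertex (`v`) of the unique nonadjacent pair of `completeMinus n`. -/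
def cmV (n : ℕ) : (completeMinus n).V := (1 : Fin (n + 2))

end Multigraph

namespace Multigraph

/-- deletion of the parallel class joining u and v -/
@[reducible] def del (G : Multigraph) (u v : G.V) : Multigraph where
  V := G.V
  E := {e : G.E // G.ends e ≠ s(u, v)}
  ends e := G.ends e.1
  loopless e := G.loopless e.1

/-- contraction of the parallel class joining u and v -/
@[reducible] def con (G : Multigraph) (u v : G.V) (huv : u ≠ v) : Multigraph where
  V := {x : G.V // x ≠ v}
  E := {e : G.E // G.ends e ≠ s(u, v)}
  ends e := (G.ends e.1).map (fun x => if h : x = v then ⟨u, huv⟩ else ⟨x, h⟩)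
  loopless := by
    rintro ⟨e, he⟩ hdiag
    have key : ∀ p : Sym2 G.V, p = G.ends e →
        ¬ ((p.map (fun x => if h : x = v then (⟨u, huv⟩ : {x : G.V // x ≠ v}) else ⟨x, h⟩)).IsDiag) := by
      intro p hp
      induction p using Sym2.ind with
      | _ x y =>
        intro hd
        rw [Sym2.map_pair_eq, Sym2.mk_isDiag_iff] at hd
        have hxy : x ≠ y := by
          intro h; exact G.loopless e (hp ▸ (by rw [h]; exact Sym2.mk_isDiag_iff.2 rfl))
        split_ifs at hd with h1 h2 h2
        · exact hxy (h1.trans h2.symm)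
        · rw [Subtype.mk.injEq] at hd
          exact he (hp ▸ (by rw [h1, ← hd]; exact Sym2.eq_swap))
        · rw [Subtype.mk.injEq] at hd
          exact he (hp ▸ (by rw [h2, hd]))
        · rw [Subtype.mk.injEq] at hd
          exact hxy hd
    exact key (G.ends e) rfl hdiag

lemma card_V_con (G : Multigraph) (u v : G.V) (huv : u ≠ v) :
    Fintype.card (G.con u v huv).V = Fintype.card G.V - 1 := by
  show Fintype.card {x : G.V // x ≠ v} = _
  rw [Fintype.card_subtype_compl, Fintype.card_subtype_eq]

lemma card_E_del (G : Multigraph) (u v : G.V) :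
    Fintype.card (G.del u v).E
      = Fintype.card G.E - Fintype.card {e : G.E // G.ends e = s(u, v)} := by
  show Fintype.card {e : G.E // ¬ (G.ends e = s(u,v))} = _
  rw [Fintype.card_subtype_compl]

/-- generic connectivity transfer along a vertex map -/
lemma connected_transfer {α β : Type*} (Gr : SimpleGraph α) (Gr' : SimpleGraph β) (f : α → β)
    (hsurj : Function.Surjective f)
    (h1 : ∀ a b, Gr.Adj a b → f a = f b ∨ Gr'.Adj (f a) (f b))
    (h2 : ∀ a' b', Gr'.Adj a' b' → ∃ a b, f a = a' ∧ f b = b' ∧ Gr.Adj a b)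
    (h3 : ∀ a b, f a = f b → Gr.Reachable a b)
    (hne : Nonempty α) :
    Gr.Connected ↔ Gr'.Connected := by
  constructor
  · intro h
    rw [SimpleGraph.connected_iff]
    refine ⟨?_, ⟨f hne.some⟩⟩
    intro b1 b2
    obtain ⟨a1, rfl⟩ := hsurj b1
    obtain ⟨a2, rfl⟩ := hsurj b2
    have hr := h.preconnected a1 a2
    rw [SimpleGraph.reachable_iff_reflTransGen] at hr ⊢
    induction hr with
    | refl => exact Relation.ReflTransGen.refl
    | tail _ hadj ih =>
      rcases h1 _ _ hadj with heq | hadj'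
      · rw [← heq]; exact ih
      · exact ih.tail hadj'
  · intro h
    rw [SimpleGraph.connected_iff]
    refine ⟨?_, hne⟩
    intro a1 a2
    have hr := h.preconnected (f a1) (f a2)
    rw [SimpleGraph.reachable_iff_reflTransGen] at hr
    have key : ∀ b1 b2 : β, Relation.ReflTransGen Gr'.Adj b1 b2 →
        ∀ x y : α, f x = b1 → f y = b2 → Gr.Reachable x y := by
      intro b1 b2 hrtg
      induction hrtg using Relation.ReflTransGen.head_induction_on with
      | refl => intro x y hx hy; exact h3 x y (hx.trans hy.symm)
      | head hadj _ ih =>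
        intro x y hx hy
        obtain ⟨p, q, hp, hq, hpq⟩ := h2 _ _ hadj
        exact ((h3 x p (hx.trans hp.symm)).trans ⟨SimpleGraph.Walk.cons hpq SimpleGraph.Walk.nil⟩).trans
          (ih _ _ hq hy)
    exact key _ _ hr a1 a2 rfl rfl


lemma spanningGraph_mono (G : Multigraph) {S T : Set G.E} (h : S ⊆ T) :
    G.spanningGraph S ≤ G.spanningGraph T := by
  intro x y ⟨hxy, e, he, hends⟩
  exact ⟨hxy, e, h he, hends⟩

open scoped Classical in
lemma rel_not_connected {G : Multigraph} (h : ¬ G.Connected) : G.Rel = 0 := by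
  rw [Rel]
  apply Finset.sum_eq_zero
  intro S _
  rw [if_neg]
  intro hc
  exact h (hc.mono (G.spanningGraph_mono (by intro e _; trivial)))

def embN (G : Multigraph) (u v : G.V) : {e : G.E // G.ends e ≠ s(u, v)} ↪ G.E :=
  ⟨Subtype.val, Subtype.val_injective⟩

lemma spanningGraph_del_eq (G : Multigraph) (u v : G.V)
    (S : Finset {e : G.E // G.ends e ≠ s(u, v)}) :
    ((G.del u v).spanningGraph (↑S : Set (G.del u v).E) : SimpleGraph G.V)
      = G.spanningGraph ↑(S.map (G.embN u v)) := by
  ext x y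
  show (x ≠ y ∧ ∃ e ∈ S, G.ends e.1 = s(x,y)) ↔ _
  constructor
  · rintro ⟨hxy, e, he, hends⟩
    exact ⟨hxy, e.1, by simpa [embN] using ⟨e.2, he⟩, hends⟩
  · rintro ⟨hxy, e, he, hends⟩
    rw [Finset.coe_map] at he
    obtain ⟨e', he', rfl⟩ := he
    exact ⟨hxy, e', he', hends⟩

/-- the contraction vertex map -/
def conMap (G : Multigraph) (u v : G.V) (huv : u ≠ v) : G.V → {x : G.V // x ≠ v} :=
  fun x => if h : x = v then ⟨u, huv⟩ else ⟨x, h⟩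

lemma conMap_eq_iff (G : Multigraph) (u v : G.V) (huv : u ≠ v) {x y : G.V} (hxy : x ≠ y)
    (h : G.conMap u v huv x = G.conMap u v huv y) : s(x, y) = s(u, v) := by
  unfold conMap at h
  split_ifs at h with h1 h2 h2
  · exact absurd (h1.trans h2.symm) hxy
  · rw [Subtype.mk.injEq] at h
    rw [h1, ← h, Sym2.eq_swap]
  · rw [Subtype.mk.injEq] at h
    rw [h2, h]
  · rw [Subtype.mk.injEq] at h
    exact absurd h hxy

lemma con_ends (G : Multigraph) (u v : G.V) (huv : u ≠ v)
    (e : {e : G.E // G.ends e ≠ s(u, v)}) :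
    (G.con u v huv).ends e = (G.ends e.1).map (G.conMap u v huv) := rfl

lemma con_connected_iff (G : Multigraph) (u v : G.V) (huv : u ≠ v) (S : Finset G.E)
    (hd : ∃ e ∈ S, G.ends e = s(u, v)) :
    (G.spanningGraph ↑S).Connected ↔
      ((G.con u v huv).spanningGraph
        (↑(S.subtype (fun e => G.ends e ≠ s(u, v))) : Set (G.con u v huv).E)).Connected := by
  obtain ⟨d, hdS, hdends⟩ := hd
  apply connected_transfer _ _ (G.conMap u v huv)
  · rintro ⟨x, hx⟩
    exact ⟨x, by simp [conMap, hx]⟩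
  · rintro a b ⟨hab, e, he, hends⟩
    by_cases hc : G.ends e = s(u, v)
    · left
      have : s(a, b) = s(u, v) := hends ▸ hc
      rw [Sym2.eq_iff] at this
      rcases this with ⟨rfl, rfl⟩ | ⟨rfl, rfl⟩ <;> simp [conMap, huv]
    · right
      refine ⟨?_, ⟨e, hc⟩, by simpa using he, ?_⟩
      · intro h
        exact hc (hends ▸ G.conMap_eq_iff u v huv hab h)
      · rw [con_ends, hends, Sym2.map_pair_eq]
  · rintro a' b' ⟨hab', e, he, hends⟩
    have key : ∀ p : Sym2 G.V, p = G.ends e.1 → p.map (G.conMap u v huv) = s(a', b') →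
        ∃ a b, G.conMap u v huv a = a' ∧ G.conMap u v huv b = b' ∧
          (G.spanningGraph ↑S).Adj a b := by
      intro p hp
      induction p using Sym2.ind with
      | _ x y =>
        intro hmap
        rw [Sym2.map_pair_eq, Sym2.eq_iff] at hmap
        have hxy : x ≠ y := fun h =>
          G.loopless e.1 (hp ▸ (by rw [h]; exact Sym2.mk_isDiag_iff.2 rfl))
        have heS : e.1 ∈ S := by simpa using he
        rcases hmap with ⟨ha, hb⟩ | ⟨hb, ha⟩
        · exact ⟨x, y, ha, hb, hxy, e.1, heS, hp.symm⟩
        · exact ⟨y, x, ha, hb, hxy.symm, e.1, heS, by rw [← hp, Sym2.eq_swap]⟩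
    rw [con_ends] at hends
    exact key _ rfl hends
  · intro a b h
    by_cases hab : a = b
    · rw [hab]
    · have hsab : s(a, b) = s(u, v) := G.conMap_eq_iff u v huv hab h
      have : (G.spanningGraph ↑S).Adj a b := ⟨hab, d, hdS, hdends.trans hsab.symm⟩
      exact this.reachable
  · exact ⟨v⟩

lemma con_connected (G : Multigraph) (u v : G.V) (huv : u ≠ v)
    (hd : ∃ e : G.E, G.ends e = s(u, v)) (hG : G.Connected) :
    (G.con u v huv).Connected := by
  obtain ⟨e, he⟩ := hd
  have h := (G.con_connected_iff u v huv Finset.univ ⟨e, Finset.mem_univ e, he⟩).1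
  have hu : ((Finset.univ : Finset G.E) : Set G.E) = Set.univ := by simp
  have hu2 : ((Finset.univ.subtype (fun e => G.ends e ≠ s(u, v)) :
      Finset {e : G.E // G.ends e ≠ s(u,v)}) : Set {e : G.E // G.ends e ≠ s(u,v)}) = Set.univ := by
    ext x; simp
  rw [hu] at h
  rw [Connected]
  rw [show (Set.univ : Set (G.con u v huv).E) = ↑(Finset.univ.subtype (fun e => G.ends e ≠ s(u, v))) from hu2.symm]
  exact h hG


open scoped Classical in
lemma sum_binom_one (α : Type*) [Fintype α] [DecidableEq α] :
    ∑ T : Finset α, (1 - X : Polynomial ℂ) ^ T.card * X ^ (Fintype.card α - T.card) = 1 := by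
  have h := Finset.prod_add (fun _ : α => (1 - X : Polynomial ℂ)) (fun _ : α => X) Finset.univ
  rw [Finset.powerset_univ] at h
  simp only [Finset.prod_const, Finset.card_univ_diff] at h
  have h2 : (1 - X + X : Polynomial ℂ) = 1 := by ring
  rw [h2, one_pow] at h
  exact h.symm

open scoped Classical in
lemma rel_rec (G : Multigraph) (u v : G.V) (huv : u ≠ v) :
    G.Rel = (1 - X ^ Fintype.card {e : G.E // G.ends e = s(u, v)}) * (G.con u v huv).Rel
      + X ^ Fintype.card {e : G.E // G.ends e = s(u, v)} * (G.del u v).Rel := by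
  classical
  set c := Fintype.card {e : G.E // G.ends e = s(u, v)} with hc
  set m := Fintype.card G.E with hm
  set mc := Fintype.card {e : G.E // G.ends e ≠ s(u, v)} with hmc
  have hcle : c ≤ m := Fintype.card_subtype_le _
  have hmc' : mc = m - c := Fintype.card_subtype_compl _
  let eP : {e : G.E // G.ends e = s(u, v)} ↪ G.E := ⟨Subtype.val, Subtype.val_injective⟩
  let Φ : Finset {e : G.E // G.ends e = s(u, v)} × Finset {e : G.E // G.ends e ≠ s(u, v)}
      ≃ Finset G.E :=
    { toFun := fun p => p.1.map eP ∪ p.2.map (G.embN u v)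
      invFun := fun S => (S.subtype (fun e => G.ends e = s(u, v)),
        S.subtype (fun e => G.ends e ≠ s(u, v)))
      left_inv := by
        rintro ⟨T, S'⟩
        dsimp only
        refine Prod.ext ?_ ?_
        · ext a
          simp only [Finset.mem_subtype, Finset.mem_union, Finset.mem_map, eP, embN,
            Function.Embedding.coeFn_mk]
          constructor
          · rintro (⟨x, hx, hxa⟩ | ⟨x, hx, hxa⟩)
            · rwa [← Subtype.ext hxa]
            · exact absurd (hxa ▸ a.2) x.2
          · intro ha
            exact Or.inl ⟨a, ha, rfl⟩
        · ext a
          simp only [Finset.mem_subtype, Finset.mem_union, Finset.mem_map, eP, embN,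
            Function.Embedding.coeFn_mk]
          constructor
          · rintro (⟨x, hx, hxa⟩ | ⟨x, hx, hxa⟩)
            · exact absurd (hxa ▸ x.2) a.2
            · rwa [← Subtype.ext hxa]
          · intro ha
            exact Or.inr ⟨a, ha, rfl⟩
      right_inv := by
        intro S
        dsimp only
        ext e
        simp only [Finset.mem_union, Finset.mem_map, Finset.mem_subtype, eP, embN,
          Function.Embedding.coeFn_mk]
        constructor
        · rintro (⟨x, hx, rfl⟩ | ⟨x, hx, rfl⟩) <;> exact hx
        · intro he
          by_cases hP : G.ends e = s(u, v)
          · exact Or.inl ⟨⟨e, hP⟩, he, rfl⟩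
          · exact Or.inr ⟨⟨e, hP⟩, he, rfl⟩ }
  have hcard : ∀ (T : Finset {e : G.E // G.ends e = s(u, v)})
      (S' : Finset {e : G.E // G.ends e ≠ s(u, v)}),
      (T.map eP ∪ S'.map (G.embN u v)).card = T.card + S'.card := by
    intro T S'
    rw [Finset.card_union_of_disjoint, Finset.card_map, Finset.card_map]
    rw [Finset.disjoint_left]
    rintro a ha hb
    rw [Finset.mem_map] at ha hb
    obtain ⟨x, -, rfl⟩ := ha
    obtain ⟨y, -, hy⟩ := hb
    have hyx : (y : G.E) = (x : G.E) := hy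
    exact y.2 (by rw [hyx]; exact x.2)
  have key : G.Rel = ∑ T : Finset {e : G.E // G.ends e = s(u, v)},
      ∑ S' : Finset {e : G.E // G.ends e ≠ s(u, v)},
      (if (G.spanningGraph ↑(T.map eP ∪ S'.map (G.embN u v))).Connected then
        (1 - X : Polynomial ℂ) ^ (T.card + S'.card) * X ^ (m - (T.card + S'.card)) else 0) := by
    have e1 : (∑ S : Finset G.E, if (G.spanningGraph ↑S).Connected then
        (1 - X : Polynomial ℂ) ^ S.card * X ^ (m - S.card) else 0)
        = ∑ p : Finset {e : G.E // G.ends e = s(u, v)} × Finset {e : G.E // G.ends e ≠ s(u, v)},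
          (if (G.spanningGraph ↑(Φ p)).Connected then
            (1 - X : Polynomial ℂ) ^ (Φ p).card * X ^ (m - (Φ p).card) else 0) :=
      (Fintype.sum_equiv Φ _ _ (fun p => rfl)).symm
    rw [Rel, e1, Fintype.sum_prod_type]
    refine Finset.sum_congr rfl fun T _ => Finset.sum_congr rfl fun S' _ => ?_
    have : Φ (T, S') = T.map eP ∪ S'.map (G.embN u v) := rfl
    rw [this, hcard T S']
  rw [key]
  rw [← Finset.add_sum_erase Finset.univ _ (Finset.mem_univ (∅ : Finset {e : G.E // G.ends e = s(u, v)}))]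
  have hFempty : ∑ S' : Finset {e : G.E // G.ends e ≠ s(u, v)},
      (if (G.spanningGraph ↑((∅ : Finset {e : G.E // G.ends e = s(u, v)}).map eP ∪ S'.map (G.embN u v))).Connected then
        (1 - X : Polynomial ℂ) ^ ((∅ : Finset {e : G.E // G.ends e = s(u, v)}).card + S'.card)
          * X ^ (m - ((∅ : Finset {e : G.E // G.ends e = s(u, v)}).card + S'.card)) else 0)
      = X ^ c * (G.del u v).Rel := by
    rw [Rel, Finset.mul_sum]
    apply Finset.sum_congr rfl
    intro S' _
    have hgr : (G.spanningGraph ↑((∅ : Finset {e : G.E // G.ends e = s(u, v)}).map eP ∪ S'.map (G.embN u v)))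
        = ((G.del u v).spanningGraph (↑S' : Set (G.del u v).E) : SimpleGraph G.V) := by
      rw [spanningGraph_del_eq, Finset.map_empty, Finset.empty_union]
    rw [hgr]
    have hce : Fintype.card (G.del u v).E = mc := Fintype.card_congr (Equiv.refl _)
    rw [hce]
    have hsc : S'.card ≤ mc := Finset.card_le_univ S'
    by_cases hconn : ((G.del u v).spanningGraph (↑S' : Set (G.del u v).E)).Connected
    · rw [if_pos hconn, if_pos hconn]
      have hexp : m - ((∅ : Finset {e : G.E // G.ends e = s(u, v)}).card + S'.card)
          = c + (mc - S'.card) := by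
        simp only [Finset.card_empty, zero_add]
        omega
      rw [hexp, pow_add, Finset.card_empty, pow_zero]
      ring
    · rw [if_neg hconn, if_neg hconn, mul_zero]
  rw [hFempty]
  have hFrest : ∑ T ∈ Finset.univ.erase (∅ : Finset {e : G.E // G.ends e = s(u, v)}),
      ∑ S' : Finset {e : G.E // G.ends e ≠ s(u, v)},
      (if (G.spanningGraph ↑(T.map eP ∪ S'.map (G.embN u v))).Connected then
        (1 - X : Polynomial ℂ) ^ (T.card + S'.card) * X ^ (m - (T.card + S'.card)) else 0)
      = (1 - X ^ c) * (G.con u v huv).Rel := by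
    have hsum : ∀ T ∈ Finset.univ.erase (∅ : Finset {e : G.E // G.ends e = s(u, v)}),
        ∑ S' : Finset {e : G.E // G.ends e ≠ s(u, v)},
        (if (G.spanningGraph ↑(T.map eP ∪ S'.map (G.embN u v))).Connected then
          (1 - X : Polynomial ℂ) ^ (T.card + S'.card) * X ^ (m - (T.card + S'.card)) else 0)
        = ((1 - X : Polynomial ℂ) ^ T.card * X ^ (c - T.card)) * (G.con u v huv).Rel := by
      intro T hT
      have hTne : T.Nonempty := Finset.nonempty_of_ne_empty (Finset.ne_of_mem_erase hT)
      rw [Rel, Finset.mul_sum]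
      apply Finset.sum_congr rfl
      intro S' _
      obtain ⟨t, ht⟩ := hTne
      have hd : ∃ e ∈ T.map eP ∪ S'.map (G.embN u v), G.ends e = s(u, v) := by
        refine ⟨t.1, Finset.mem_union_left _ (Finset.mem_map_of_mem _ ht), t.2⟩
      have hsub : (T.map eP ∪ S'.map (G.embN u v)).subtype (fun e => G.ends e ≠ s(u, v)) = S' := by
        ext a
        simp only [Finset.mem_subtype, Finset.mem_union, Finset.mem_map, eP, embN,
          Function.Embedding.coeFn_mk]
        constructor
        · rintro (⟨x, hx, hxa⟩ | ⟨x, hx, hxa⟩)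
          · exact absurd (hxa ▸ x.2) a.2
          · rwa [← Subtype.ext hxa]
        · intro ha
          exact Or.inr ⟨a, ha, rfl⟩
      have hiff := G.con_connected_iff u v huv (T.map eP ∪ S'.map (G.embN u v)) hd
      rw [hsub] at hiff
      have hcc : Fintype.card (G.con u v huv).E = mc := Fintype.card_congr (Equiv.refl _)
      rw [hcc]
      have hsc : S'.card ≤ mc := Finset.card_le_univ S'
      have htc : T.card ≤ c := Finset.card_le_univ T
      by_cases hconn : ((G.con u v huv).spanningGraph (↑S' : Set (G.con u v huv).E)).Connected
      · rw [if_pos (hiff.2 hconn), if_pos hconn]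
        have hexp : m - (T.card + S'.card) = (c - T.card) + (mc - S'.card) := by omega
        rw [hexp, pow_add, pow_add]
        ring
      · rw [if_neg (fun h => hconn (hiff.1 h)), if_neg hconn, mul_zero]
    rw [Finset.sum_congr rfl hsum, ← Finset.sum_mul]
    congr 1
    have hself := Finset.add_sum_erase Finset.univ
      (fun T : Finset {e : G.E // G.ends e = s(u, v)} => (1 - X : Polynomial ℂ) ^ T.card * X ^ (c - T.card))
      (Finset.mem_univ ∅)
    rw [sum_binom_one] at hself
    simp only [Finset.card_empty, pow_zero, Nat.sub_zero, one_mul] at hself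
    linear_combination hself
  rw [hFrest]
  ring

open scoped Classical in
lemma rel_one (G : Multigraph) (h : Fintype.card G.V = 1) : G.Rel = 1 := by
  classical
  have hsub : Subsingleton G.V := Fintype.card_le_one_iff_subsingleton.mp (by omega)
  have hE : IsEmpty G.E := by
    refine ⟨fun e => ?_⟩
    have key : ∀ p : Sym2 G.V, p.IsDiag := by
      intro p
      induction p using Sym2.ind with
      | _ a b => exact Sym2.mk_isDiag_iff.2 (Subsingleton.elim a b)
    exact G.loopless e (key _)
  have hconn : ∀ S : Set G.E, (G.spanningGraph S).Connected := by
    intro S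
    rw [SimpleGraph.connected_iff]
    refine ⟨?_, Fintype.card_pos_iff.mp (by omega)⟩
    intro a b
    have hab : a = b := Subsingleton.elim a b
    rw [hab]
  have huniv : (Finset.univ : Finset (Finset G.E)) = {∅} := by
    ext S
    simp only [Finset.mem_univ, Finset.mem_singleton, true_iff]
    exact Finset.eq_empty_of_isEmpty S
  rw [Rel, huniv, Finset.sum_singleton, if_pos (hconn _)]
  simp

lemma not_connected_of_isolated (G : Multigraph) (x y : G.V) (hxy : x ≠ y)
    (hiso : ∀ (e : G.E) (z : G.V), G.ends e ≠ s(x, z)) : ¬ G.Connected := by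
  intro h
  have hr := h.preconnected x y
  rw [SimpleGraph.reachable_iff_reflTransGen] at hr
  rcases Relation.ReflTransGen.cases_head hr with heq | ⟨z, ⟨-, e, -, hends⟩, -⟩
  · exact hxy heq
  · exact hiso e z hends

open scoped Classical in
lemma rel_two (G : Multigraph) (h : Fintype.card G.V = 2) :
    G.Rel = 1 - X ^ (Fintype.card G.E) := by
  classical
  have h2 : (Finset.univ : Finset G.V).card = 2 := by rw [Finset.card_univ, h]
  obtain ⟨x, y, hxy, hU⟩ := Finset.card_eq_two.mp h2
  have hall : ∀ z : G.V, z = x ∨ z = y := by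
    intro z
    have : z ∈ (Finset.univ : Finset G.V) := Finset.mem_univ z
    rw [hU] at this
    simpa using this
  by_cases hE : IsEmpty G.E
  · have hnc : ¬ G.Connected := G.not_connected_of_isolated x y hxy (fun e => hE.elim e)
    rw [rel_not_connected hnc]
    rw [Fintype.card_eq_zero, pow_zero]
    ring
  · have hends : ∀ e : G.E, G.ends e = s(x, y) := by
      intro e
      have key : ∀ p : Sym2 G.V, p = G.ends e → p = s(x, y) := by
        intro p hp
        induction p using Sym2.ind with
        | _ a b =>
          have hab : a ≠ b := by
            intro hh
            exact G.loopless e (hp ▸ (by rw [hh]; exact Sym2.mk_isDiag_iff.2 rfl))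
          rcases hall a with rfl | rfl <;> rcases hall b with rfl | rfl
          · exact absurd rfl hab
          · rfl
          · rw [Sym2.eq_swap]
          · exact absurd rfl hab
      exact key _ rfl
    rw [rel_rec G x y hxy]
    have hcE : Fintype.card {e : G.E // G.ends e = s(x, y)} = Fintype.card G.E :=
      Fintype.card_congr (Equiv.subtypeUnivEquiv hends)
    have hcon1 : Fintype.card (G.con x y hxy).V = 1 := by rw [card_V_con, h]
    have hdel0 : IsEmpty (G.del x y).E := ⟨fun e => e.2 (hends e.1)⟩
    rw [rel_one _ hcon1, hcE]
    have hnc : ¬ (G.del x y).Connected :=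
      (G.del x y).not_connected_of_isolated x y hxy (fun e => hdel0.elim e)
    rw [rel_not_connected hnc]
    ring


lemma sym2_ne_aux {V : Type*} {u v w : V} (huv : u ≠ v) (huw : u ≠ w) (hvw : v ≠ w) :
    s(u, v) ≠ s(u, w) ∧ s(u, v) ≠ s(v, w) ∧ s(u, w) ≠ s(v, w) := by
  refine ⟨?_, ?_, ?_⟩
  · rw [Ne, Sym2.eq_iff]
    rintro (⟨-, h⟩ | ⟨h, -⟩)
    exacts [hvw h, huw h]
  · rw [Ne, Sym2.eq_iff]
    rintro (⟨h, -⟩ | ⟨h, -⟩)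
    exacts [huv h, huw h]
  · rw [Ne, Sym2.eq_iff]
    rintro (⟨h, -⟩ | ⟨h, -⟩)
    exacts [huv h, huw h]

lemma ends_mem_three (G : Multigraph) {u v w : G.V}
    (hall : ∀ z : G.V, z = u ∨ z = v ∨ z = w) (e : G.E) :
    G.ends e = s(u, v) ∨ G.ends e = s(u, w) ∨ G.ends e = s(v, w) := by
  have key : ∀ p : Sym2 G.V, p = G.ends e →
      p = s(u, v) ∨ p = s(u, w) ∨ p = s(v, w) := by
    intro p hp
    induction p using Sym2.ind with
    | _ x y =>
      have hxy : x ≠ y := by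
        intro hh
        exact G.loopless e (hp ▸ (by rw [hh]; exact Sym2.mk_isDiag_iff.2 rfl))
      rcases hall x with rfl | rfl | rfl <;> rcases hall y with rfl | rfl | rfl <;>
        first
          | exact absurd rfl hxy
          | exact Or.inl rfl
          | exact Or.inl Sym2.eq_swap
          | exact Or.inr (Or.inl rfl)
          | exact Or.inr (Or.inl Sym2.eq_swap)
          | exact Or.inr (Or.inr rfl)
          | exact Or.inr (Or.inr Sym2.eq_swap)
  exact key _ rfl

open scoped Classical in
lemma rel_three (G : Multigraph) (u v w : G.V)
    (huv : u ≠ v) (huw : u ≠ w) (hvw : v ≠ w)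
    (hall : ∀ z : G.V, z = u ∨ z = v ∨ z = w) :
    G.Rel = (1 - X ^ (Fintype.card {e : G.E // G.ends e = s(u, w)}
                      + Fintype.card {e : G.E // G.ends e = s(v, w)}))
          * (1 - X ^ (Fintype.card {e : G.E // G.ends e = s(u, v)}))
        + X ^ (Fintype.card {e : G.E // G.ends e = s(u, v)})
          * ((1 - X ^ (Fintype.card {e : G.E // G.ends e = s(u, w)}))
           * (1 - X ^ (Fintype.card {e : G.E // G.ends e = s(v, w)}))) := by
  classical
  obtain ⟨n1, n2, n3⟩ := sym2_ne_aux huv huw hvw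
  set a := Fintype.card {e : G.E // G.ends e = s(u, w)} with ha
  set b := Fintype.card {e : G.E // G.ends e = s(v, w)} with hb
  set c := Fintype.card {e : G.E // G.ends e = s(u, v)} with hc
  have hcard3 : Fintype.card G.V = 3 := by
    rw [← Finset.card_univ]
    apply Finset.card_eq_three.mpr
    exact ⟨u, v, w, huv, huw, hvw, by ext z; simp [hall z]⟩
  -- the contraction of the uv class is a two-vertex graph with a + b edges
  have hconV : Fintype.card (G.con u v huv).V = 2 := by rw [card_V_con, hcard3]
  have hconE : Fintype.card (G.con u v huv).E = a + b := by
    have : Fintype.card {e : G.E // G.ends e ≠ s(u, v)} = a + b := by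
      rw [ha, hb, Fintype.card_subtype, Fintype.card_subtype, Fintype.card_subtype]
      rw [← Finset.card_union_of_disjoint]
      · congr 1
        ext e
        simp only [Finset.mem_filter, Finset.mem_univ, true_and, Finset.mem_union]
        constructor
        · intro he
          rcases G.ends_mem_three hall e with h | h | h
          · exact absurd h he
          · exact Or.inl h
          · exact Or.inr h
        · rintro (h | h) <;> rw [h]
          exacts [n1.symm, n2.symm]
      · rw [Finset.disjoint_left]
        intro e he1 he2
        rw [Finset.mem_filter] at he1 he2
        exact n3 (he1.2 ▸ he2.2)
    exact this
  have hrelcon : (G.con u v huv).Rel = 1 - X ^ (a + b) := by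
    rw [rel_two _ hconV, hconE]
  -- the deletion
  have hreldel : (G.del u v).Rel = (1 - X ^ a) * (1 - X ^ b) := by
    by_cases ha0 : a = 0
    · have haE : IsEmpty {e : G.E // G.ends e = s(u, w)} := by
        rw [← Fintype.card_eq_zero_iff, ← ha]; exact ha0
      have hnc : ¬ (G.del u v).Connected := by
        apply (G.del u v).not_connected_of_isolated u v huv
        intro e z hez
        rcases G.ends_mem_three hall e.1 with h | h | h
        · exact e.2 h
        · exact haE.elim ⟨e.1, h⟩
        · have : s(u, z) = s(v, w) := by rw [← hez, h]
          rw [Sym2.eq_iff] at this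
          rcases this with ⟨h1, -⟩ | ⟨h1, -⟩
          exacts [huv h1, huw h1]
      rw [rel_not_connected hnc, ha0, pow_zero]
      ring
    · by_cases hb0 : b = 0
      · have hbE : IsEmpty {e : G.E // G.ends e = s(v, w)} := by
          rw [← Fintype.card_eq_zero_iff, ← hb]; exact hb0
        have hnc : ¬ (G.del u v).Connected := by
          apply (G.del u v).not_connected_of_isolated v u huv.symm
          intro e z hez
          rcases G.ends_mem_three hall e.1 with h | h | h
          · exact e.2 h
          · have : s(v, z) = s(u, w) := by rw [← hez, h]
            rw [Sym2.eq_iff] at this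
            rcases this with ⟨h1, -⟩ | ⟨h1, -⟩
            exacts [huv h1.symm, hvw h1]
          · exact hbE.elim ⟨e.1, h⟩
        rw [rel_not_connected hnc, hb0, pow_zero]
        ring
      · -- both classes nonempty: recurse on the uw class of the deletion
        set G' := G.del u v with hG'
        have hrec2 := rel_rec G' u w huw
        have hc' : Fintype.card {e : G'.E // G'.ends e = s(u, w)} = a := by
          rw [ha]
          apply Fintype.card_congr
          refine ⟨fun e => ⟨e.1.1, e.2⟩, fun e => ⟨⟨e.1, by rw [e.2]; exact n1.symm⟩, e.2⟩, ?_, ?_⟩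
          · rintro ⟨⟨e, h1⟩, h2⟩; rfl
          · rintro ⟨e, h⟩; rfl
        have hconV' : Fintype.card (G'.con u w huw).V = 2 := by
          rw [card_V_con]
          have : Fintype.card G'.V = 3 := hcard3
          rw [this]
        have hconE' : Fintype.card (G'.con u w huw).E = b := by
          rw [hb]
          apply Fintype.card_congr
          refine ⟨fun e => ⟨e.1.1, by
              rcases G.ends_mem_three hall e.1.1 with h | h | h
              · exact absurd h e.1.2
              · exact absurd h e.2
              · exact h⟩,
            fun e => ⟨⟨e.1, fun h => n2 (by rw [← h]; exact e.2)⟩,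
              fun h => n3 (by rw [← (h : G.ends e.1 = s(u, w))]; exact e.2)⟩, ?_, ?_⟩
          · rintro ⟨⟨e, h1⟩, h2⟩; rfl
          · rintro ⟨e, h⟩; rfl
        have hdel2 : ¬ (G'.del u w).Connected := by
          apply (G'.del u w).not_connected_of_isolated u v huv
          intro e z hez
          rcases G.ends_mem_three hall e.1.1 with h | h | h
          · exact e.1.2 h
          · exact e.2 h
          · have : s(u, z) = s(v, w) := by rw [← hez]; exact h
            rw [Sym2.eq_iff] at this
            rcases this with ⟨h1, -⟩ | ⟨h1, -⟩
            exacts [huv h1, huw h1]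
        rw [rel_two _ hconV', hconE', hc', rel_not_connected hdel2] at hrec2
        rw [hG'] at hrec2
        rw [hrec2]
        ring
  rw [rel_rec G u v huv, hrelcon, hreldel]
  ring


open Real in
/-- complex sector of half-angle θ around the positive real axis -/
def secC (θ : ℝ) (A : ℂ) : Prop := A ≠ 0 ∧ |A.arg| ≤ θ

lemma secC_mono {θ θ' : ℝ} (h : θ ≤ θ') {A : ℂ} (hA : secC θ A) : secC θ' A :=
  ⟨hA.1, hA.2.trans h⟩

open Real in
lemma secC_re {θ : ℝ} (hθ : θ < π/2) {A : ℂ} (h : secC θ A) :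
    ‖A‖ * Real.cos θ ≤ A.re := by
  have hre : A.re = ‖A‖ * Real.cos A.arg := by
    rw [Complex.cos_arg h.1]
    field_simp [norm_ne_zero_iff.mpr h.1]
  have hcos : Real.cos θ ≤ Real.cos A.arg := by
    rw [← Real.cos_abs A.arg]
    exact Real.cos_le_cos_of_nonneg_of_le_pi (abs_nonneg _) (by linarith [Real.pi_pos]) h.2
  rw [hre]
  exact mul_le_mul_of_nonneg_left hcos (norm_nonneg _)

open Real in
lemma secC_re_pos {θ : ℝ} (hθ0 : 0 ≤ θ) (hθ : θ < π/2) {A : ℂ} (h : secC θ A) : 0 < A.re := by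
  have hcpos : 0 < Real.cos θ :=
    Real.cos_pos_of_mem_Ioo ⟨by linarith [Real.pi_pos], hθ⟩
  exact lt_of_lt_of_le (mul_pos (norm_pos_iff.mpr h.1) hcpos) (secC_re hθ h)

open Real in
lemma secC_add {θ : ℝ} (hθ0 : 0 ≤ θ) (hθ : θ < π/2) {A B : ℂ}
    (hA : secC θ A) (hB : secC θ B) : secC θ (A + B) := by
  have hcpos : 0 < Real.cos θ :=
    Real.cos_pos_of_mem_Ioo ⟨by linarith [Real.pi_pos], hθ⟩
  have hre : ‖A + B‖ * Real.cos θ ≤ (A + B).re := by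
    have h1 := secC_re hθ hA
    have h2 := secC_re hθ hB
    have h3 : ‖A + B‖ ≤ ‖A‖ + ‖B‖ :=
      norm_add_le _ _
    have h4 : (A + B).re = A.re + B.re := Complex.add_re A B
    nlinarith [hcpos]
  have hpos : 0 < (A + B).re := by
    rw [Complex.add_re]
    linarith [secC_re_pos hθ0 hθ hA, secC_re_pos hθ0 hθ hB]
  have hne : A + B ≠ 0 := fun h0 => by rw [h0] at hpos; simp at hpos
  refine ⟨hne, ?_⟩
  by_contra habs
  push_neg at habs
  have hlt : Real.cos ((A + B).arg) < Real.cos θ := by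
    rw [← Real.cos_abs]
    exact Real.strictAntiOn_cos ⟨hθ0, by linarith [Real.pi_pos]⟩
      ⟨abs_nonneg _, Complex.abs_arg_le_pi _⟩ habs
  have hre2 : (A + B).re = ‖A + B‖ * Real.cos (A + B).arg := by
    rw [Complex.cos_arg hne]
    field_simp [norm_ne_zero_iff.mpr hne]
  nlinarith [norm_pos_iff.mpr hne]

open Real in
lemma secC_mul {β θ : ℝ} {wc A : ℂ} (hw : secC β wc) (hA : secC θ A) (hsum : β + θ < π) :
    secC (β + θ) (wc * A) := by
  have hβ : 0 ≤ β := le_trans (abs_nonneg _) hw.2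
  have hθ0 : 0 ≤ θ := le_trans (abs_nonneg _) hA.2
  have hmem : wc.arg + A.arg ∈ Set.Ioc (-π) π := by
    constructor
    · have := abs_le.mp hw.2
      have := abs_le.mp hA.2
      nlinarith [Real.pi_pos]
    · have := abs_le.mp hw.2
      have := abs_le.mp hA.2
      linarith
  refine ⟨mul_ne_zero hw.1 hA.1, ?_⟩
  rw [Complex.arg_mul hw.1 hA.1 hmem]
  calc |wc.arg + A.arg| ≤ |wc.arg| + |A.arg| := abs_add_le _ _
    _ ≤ β + θ := add_le_add hw.2 hA.2

open Real in
lemma secC_near_one {r : ℝ} (hr : r < 1) {wc : ℂ} (h : ‖wc - 1‖ ≤ r) :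
    secC (Real.arcsin r) wc := by
  have hr0 : 0 ≤ r := le_trans (norm_nonneg _) h
  have hre : 1 - r ≤ wc.re := by
    have h1 := Complex.abs_re_le_norm (wc - 1)
    rw [Complex.sub_re, Complex.one_re] at h1
    have := abs_le.mp (h1.trans h)
    linarith [this.1]
  have hwne : wc ≠ 0 := by
    intro h0
    rw [h0] at hre
    simp at hre
    linarith
  have hargl : |wc.arg| < π/2 :=
    Complex.abs_arg_lt_pi_div_two_iff.mpr (Or.inl (by linarith))
  have habs2 : (wc.re - 1)^2 + wc.im^2 ≤ r^2 := by
    have he : ‖wc - 1‖^2 = (wc.re - 1)^2 + wc.im^2 := by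
      rw [Complex.sq_norm, Complex.normSq_apply, Complex.sub_re, Complex.sub_im,
        Complex.one_re, Complex.one_im]
      ring
    nlinarith [norm_nonneg (wc - 1)]
  have habsw : (‖wc‖)^2 = wc.re^2 + wc.im^2 := by
    rw [Complex.sq_norm, Complex.normSq_apply]
    ring
  have hsin : |Real.sin wc.arg| ≤ r := by
    rw [Complex.sin_arg, abs_div, abs_of_nonneg (norm_nonneg wc)]
    rw [div_le_iff₀ (norm_pos_iff.mpr hwne)]
    have him2 : wc.im^2 ≤ (r * ‖wc‖)^2 := by
      have hexp : (r * ‖wc‖)^2 = r^2 * (wc.re^2 + wc.im^2) := by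
        rw [mul_pow, habsw]
      rw [hexp]
      nlinarith [sq_nonneg (wc.re - 1 + r^2), sq_nonneg wc.im, habs2, hr0, hr]
    rcases abs_cases wc.im with ⟨heq, -⟩ | ⟨heq, -⟩ <;> rw [heq] <;>
      nlinarith [him2, mul_nonneg hr0 (norm_nonneg wc)]
  have hsinabs : Real.sin |wc.arg| ≤ r := by
    rcases le_or_gt 0 wc.arg with hs | hs
    · rw [abs_of_nonneg hs]
      calc Real.sin wc.arg ≤ |Real.sin wc.arg| := le_abs_self _
        _ ≤ r := hsin
    · rw [abs_of_neg hs, Real.sin_neg]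
      calc -Real.sin wc.arg ≤ |Real.sin wc.arg| := neg_le_abs _
        _ ≤ r := hsin
  refine ⟨hwne, ?_⟩
  have harcsin : |wc.arg| = Real.arcsin (Real.sin |wc.arg|) :=
    (Real.arcsin_sin (by linarith [abs_nonneg wc.arg]) (by linarith)).symm
  rw [harcsin]
  exact Real.monotone_arcsin hsinabs

open Real in
lemma key_sin {n : ℕ} (hn : 4 ≤ n) : 1/((n:ℝ) - 2) ≤ Real.sin (π/(2*((n:ℝ) - 1))) := by
  rcases eq_or_lt_of_le hn with h4 | h5
  · subst h4
    push_cast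
    rw [show π/(2*((4:ℝ) - 1)) = π/6 by norm_num, Real.sin_pi_div_six]
    norm_num
  · have hn5 : (5:ℝ) ≤ (n:ℝ) := by exact_mod_cast h5
    set N := (n:ℝ) with hN
    set x := π/(2*(N - 1)) with hx
    have hN1 : (4:ℝ) ≤ N - 1 := by linarith
    have hx0 : 0 < x := div_pos Real.pi_pos (by linarith)
    have hxπ : x * (2*(N - 1)) = π := by
      rw [hx]; field_simp
    have hπ3 : (3:ℝ) < π := Real.pi_gt_three
    have hπ4 : π < 3.15 := Real.pi_lt_d2
    have h2 : x < 0.4 := by nlinarith [hxπ, hπ4, hx0, hN1]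
    have h1 : 3/2 < x * (N - 1) := by nlinarith [hxπ, hπ3]
    have hcube : x - x^3/4 < Real.sin x := by have := Real.sin_gt_sub_cube hx0; nlinarith [pow_pos hx0 3]
    have h3 : x * (N - 2) > 1.1 := by nlinarith
    have hx2 : x^2 < 0.16 := by nlinarith
    have hgoal : 1/(N - 2) ≤ x - x^3/4 := by
      rw [div_le_iff₀ (by linarith : (0:ℝ) < N - 2)]
      nlinarith [h3, hx2, hx0, mul_pos hx0 (show (0:ℝ) < N - 2 by linarith)]
    linarith

lemma geom_tail_bound {z : ℂ} {t : ℝ} (hzt : ‖z⁻¹‖ = t) (ht : t < 1)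
    (c : ℕ) (hc : 1 ≤ c) :
    ‖(∑ j ∈ Finset.range c, (z⁻¹)^j) - 1‖ ≤ t/(1 - t) := by
  have ht0 : 0 ≤ t := hzt ▸ norm_nonneg _
  have h1t : 0 < 1 - t := by linarith
  obtain ⟨k, rfl⟩ : ∃ k, c = k + 1 := ⟨c - 1, by omega⟩
  rw [Finset.sum_range_succ']
  simp only [pow_zero]
  rw [add_sub_cancel_right]
  have hterm : ∀ j : ℕ, ‖(z⁻¹)^(j+1)‖ = t^(j+1) := by
    intro j
    rw [norm_pow, hzt]
  calc ‖∑ j ∈ Finset.range k, (z⁻¹)^(j+1)‖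
      ≤ ∑ j ∈ Finset.range k, ‖(z⁻¹)^(j+1)‖ := by
        simpa using norm_sum_le (Finset.range k) (fun j => (z⁻¹)^(j+1))
    _ = ∑ j ∈ Finset.range k, t^(j+1) := by
        exact Finset.sum_congr rfl (fun j _ => hterm j)
    _ = t * ∑ j ∈ Finset.range k, t^j := by
        rw [Finset.mul_sum]
        exact Finset.sum_congr rfl (fun j _ => by ring)
    _ ≤ t * (1/(1 - t)) := by
        apply mul_le_mul_of_nonneg_left _ ht0
        rw [le_div_iff₀ h1t]
        have hg := geom_sum_mul t k
        have : (∑ j ∈ Finset.range k, t^j) * (1 - t) = 1 - t^k := by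
          have := geom_sum_mul (t : ℝ) k
          nlinarith [this]
        rw [this]
        nlinarith [pow_nonneg ht0 k]
    _ = t/(1 - t) := by ring


lemma exists_ends (G : Multigraph) (e : G.E) : ∃ x y : G.V, x ≠ y ∧ G.ends e = s(x, y) := by
  have key : ∀ p : Sym2 G.V, p = G.ends e → ∃ x y : G.V, x ≠ y ∧ G.ends e = s(x, y) := by
    intro p hp
    induction p using Sym2.ind with
    | _ x y =>
      refine ⟨x, y, ?_, hp.symm⟩
      intro h
      exact G.loopless e (hp ▸ (by rw [h]; exact Sym2.mk_isDiag_iff.2 rfl))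
  exact key _ rfl

open Real in
lemma main_aux (n : ℕ) (hn : 4 ≤ n) (z : ℂ) (hz : ((n:ℝ) - 1) < ‖z‖) :
    ∀ m : ℕ, ∀ G : Multigraph, Fintype.card G.E = m → G.Connected →
      Fintype.card G.V ≤ n →
      ∃ A : ℂ,
        secC (((Fintype.card G.V - 1 : ℕ) : ℝ) *
          Real.arcsin ((‖z‖)⁻¹/(1 - (‖z‖)⁻¹))) A ∧
        z ^ (Fintype.card G.V - 1) * G.Rel.eval z
          = z ^ m * (1 - z) ^ (Fintype.card G.V - 1) * A := by
  have hn4 : (4:ℝ) ≤ (n:ℝ) := by exact_mod_cast hn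
  have habs : 3 ≤ ‖z‖ := by linarith
  have hz0 : z ≠ 0 := by
    intro h
    rw [h, norm_zero] at habs
    norm_num at habs
  set t := (‖z‖)⁻¹ with hT
  have ht0 : 0 < t := inv_pos.mpr (by linarith)
  have htn : t < 1/((n:ℝ)-1) := by
    rw [hT, inv_eq_one_div]
    apply div_lt_div_of_pos_left one_pos (by linarith) hz
  have ht1 : t < 1 := by
    have h1 : 1/((n:ℝ)-1) ≤ 1 := by
      rw [div_le_one (by linarith)]
      linarith
    linarith
  set δ := t/(1-t) with hδ
  have hδ0 : 0 ≤ δ := div_nonneg ht0.le (by linarith)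
  have htm : t * ((n:ℝ)-1) < 1 := by
    calc t * ((n:ℝ)-1) < (1/((n:ℝ)-1)) * ((n:ℝ)-1) := by
          apply mul_lt_mul_of_pos_right htn (by linarith)
      _ = 1 := one_div_mul_cancel (by linarith)
  have hδn : δ < 1/((n:ℝ)-2) := by
    rw [hδ, div_lt_div_iff₀ (by linarith) (by linarith)]
    nlinarith
  have hδhalf : δ < 1/2 := by
    have : 1/((n:ℝ)-2) ≤ 1/2 := by
      rw [div_le_div_iff₀ (by linarith) (by norm_num)]
      linarith
    linarith
  set β := Real.arcsin δ with hβ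
  have hβ0 : 0 ≤ β := Real.arcsin_nonneg.mpr hδ0
  have hβbound : ((n:ℝ)-1) * β < π/2 := by
    have hkey := key_sin hn
    have hδsin : δ < Real.sin (π/(2*((n:ℝ)-1))) := lt_of_lt_of_le hδn hkey
    have hβlt : β < π/(2*((n:ℝ)-1)) := by
      by_contra hle
      push_neg at hle
      have hmono := Real.strictMonoOn_sin.monotoneOn
        (Set.mem_Icc.mpr ⟨le_trans (by linarith [Real.pi_pos] : -(π/2) ≤ (0:ℝ))
          (div_nonneg Real.pi_pos.le (by linarith : (0:ℝ) ≤ 2*((n:ℝ)-1))), by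
          rw [div_le_div_iff₀ (by linarith) (by norm_num)]
          nlinarith [Real.pi_pos]⟩)
        (Set.mem_Icc.mpr ⟨Real.neg_pi_div_two_le_arcsin δ, Real.arcsin_le_pi_div_two δ⟩) hle
      rw [Real.sin_arcsin (by linarith) (by linarith)] at hmono
      linarith
    calc ((n:ℝ)-1)*β < ((n:ℝ)-1) * (π/(2*((n:ℝ)-1))) :=
          mul_lt_mul_of_pos_left hβlt (by linarith)
      _ = π/2 := by
          field_simp [show ((n:ℝ)-1) ≠ 0 by linarith]
  intro m
  induction m using Nat.strong_induction_on with
  | _ m ih =>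
    intro G hGm hGconn hGn
    rcases isEmpty_or_nonempty G.E with hE | hE
    · -- no edges: a single vertex
      have hsub : Subsingleton G.V := by
        constructor
        intro x y
        have hr := hGconn.preconnected x y
        rw [SimpleGraph.reachable_iff_reflTransGen] at hr
        rcases Relation.ReflTransGen.cases_head hr with heq | ⟨z0, ⟨-, e, -, -⟩, -⟩
        · exact heq
        · exact hE.elim e
      have hV1 : Fintype.card G.V = 1 := by
        have h1 : Fintype.card G.V ≤ 1 := Fintype.card_le_one_iff_subsingleton.mpr hsub
        have h2 : 0 < Fintype.card G.V := Fintype.card_pos_iff.mpr hGconn.nonempty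
        omega
      have hm0 : m = 0 := by
        rw [← hGm]
        exact Fintype.card_eq_zero
      refine ⟨1, ⟨one_ne_zero, ?_⟩, ?_⟩
      · rw [Complex.arg_one, abs_zero]
        positivity
      · rw [rel_one G hV1, hV1, hm0]
        simp
    · -- at least one edge
      obtain ⟨e₀⟩ := hE
      obtain ⟨u, v, huv, hends⟩ := G.exists_ends e₀
      set c := Fintype.card {e : G.E // G.ends e = s(u, v)} with hc
      have hc1 : 1 ≤ c := Fintype.card_pos_iff.mpr ⟨⟨e₀, hends⟩⟩
      have hcm : c ≤ m := by
        rw [← hGm]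
        exact Fintype.card_subtype_le _
      set ν := Fintype.card G.V with hν
      have hν2 : 2 ≤ ν := by
        rw [hν]
        exact Fintype.one_lt_card_iff_nontrivial.mpr ⟨⟨u, v, huv⟩⟩
      have hconV : Fintype.card (G.con u v huv).V = ν - 1 := card_V_con G u v huv
      have hconE : Fintype.card (G.con u v huv).E = m - c := by
        have h1 : Fintype.card (G.con u v huv).E
            = Fintype.card {e : G.E // G.ends e ≠ s(u, v)} :=
          Fintype.card_congr (Equiv.refl _)
        rw [h1, Fintype.card_subtype_compl, hGm]
      have hdelV : Fintype.card (G.del u v).V = ν :=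
        Fintype.card_congr (Equiv.refl _)
      have hdelE : Fintype.card (G.del u v).E = m - c := by
        have h1 : Fintype.card (G.del u v).E
            = Fintype.card {e : G.E // G.ends e ≠ s(u, v)} :=
          Fintype.card_congr (Equiv.refl _)
        rw [h1, Fintype.card_subtype_compl, hGm]
      have hconC : (G.con u v huv).Connected := G.con_connected u v huv ⟨e₀, hends⟩ hGconn
      obtain ⟨A₁, hA₁sec, hA₁⟩ := ih (m - c) (by omega) (G.con u v huv) hconE hconC
        (by rw [hconV]; omega)
      rw [hconV] at hA₁sec hA₁
      -- the coefficient w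
      set wc := ∑ j ∈ Finset.range c, (z⁻¹)^j with hwc
      have hwnear : ‖wc - 1‖ ≤ δ :=
        geom_tail_bound (norm_inv z) ht1 c hc1
      have hwsec : secC β wc := secC_near_one (by linarith) hwnear
      -- numeric sector facts
      have hνn : ((ν - 1 : ℕ) : ℝ) ≤ (n:ℝ) - 1 := by
        have h1 : ((ν - 1 : ℕ) : ℝ) = (ν : ℝ) - 1 := by
          push_cast [Nat.cast_sub (by omega : 1 ≤ ν)]
          ring
        have h2 : (ν:ℝ) ≤ (n:ℝ) := by exact_mod_cast hGn
        linarith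
      have hθcap : ((ν - 1 : ℕ) : ℝ) * β ≤ ((n:ℝ)-1) * β :=
        mul_le_mul_of_nonneg_right hνn hβ0
      have hθlt : ((ν - 1 : ℕ) : ℝ) * β < π/2 := lt_of_le_of_lt hθcap hβbound
      have hθ0 : 0 ≤ ((ν - 1 : ℕ) : ℝ) * β := by positivity
      have hcastν : ((ν - 1 : ℕ) : ℝ) = ((ν - 1 - 1 : ℕ) : ℝ) + 1 := by
        have hnat : ν - 1 - 1 + 1 = ν - 1 := by omega
        exact_mod_cast (congrArg (Nat.cast (R := ℝ)) hnat).symm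
      have hwA₁sec : secC (((ν - 1 : ℕ) : ℝ) * β) (wc * A₁) := by
        have hmul := secC_mul hwsec hA₁sec (by
          have : β + ((ν - 1 - 1 : ℕ) : ℝ) * β = ((ν - 1 : ℕ) : ℝ) * β := by
            rw [hcastν]; ring
          rw [this]
          linarith [Real.pi_pos])
        exact secC_mono (le_of_eq (by rw [hcastν]; ring)) hmul
      -- power juggling facts
      have hZm : z^m = z * z^(c-1) * z^(m-c) := by
        have h1 : z * z^(c-1) * z^(m-c) = z^m := by
          rw [← pow_succ', ← pow_add]
          congr 1
          omega
        exact h1.symm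
      have hZc : z^c = z * z^(c-1) := by
        rw [← pow_succ']
        congr 1
        omega
      have hZν : z^(ν-1) = z * z^(ν-1-1) := by
        rw [← pow_succ']
        congr 1
        omega
      have hPν : (1-z)^(ν-1) = (1-z) * (1-z)^(ν-1-1) := by
        rw [← pow_succ']
        congr 1
        omega
      have hgeom : (1 : ℂ) - z^c = (1 - z) * (z^(c-1) * wc) := by
        have hgs := geom_sum_mul z c
        have hpowsum : (∑ j ∈ Finset.range c, z^j) = z^(c-1) * wc := by
          rw [hwc, Finset.mul_sum, ← Finset.sum_range_reflect (fun j => z^j) c]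
          apply Finset.sum_congr rfl
          intro j hj
          rw [Finset.mem_range] at hj
          rw [pow_sub₀ z hz0 (by omega), inv_pow]
        calc (1:ℂ) - z^c = (∑ j ∈ Finset.range c, z^j) * (1 - z) := by
              linear_combination hgs
          _ = (1 - z) * (z^(c-1) * wc) := by rw [hpowsum]; ring
      have hevalrec : G.Rel.eval z
          = (1 - z^c) * ((G.con u v huv).Rel.eval z) + z^c * ((G.del u v).Rel.eval z) := by
        rw [rel_rec G u v huv]
        simp [eval_add, eval_mul, eval_sub, eval_pow, eval_one, eval_X, hc]
      by_cases hdelC : (G.del u v).Connected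
      · obtain ⟨A₂, hA₂sec, hA₂⟩ := ih (m - c) (by omega) (G.del u v) hdelE hdelC
          (by rw [hdelV]; omega)
        rw [hdelV] at hA₂sec hA₂
        refine ⟨wc * A₁ + A₂, secC_add hθ0 hθlt hwA₁sec hA₂sec, ?_⟩
        rw [hevalrec, hgeom, hZm, hZc, hZν, hPν]
        rw [hZν, hPν] at hA₂
        linear_combination (z*(1-z)*z^(c-1)*wc) * hA₁ + (z*z^(c-1)) * hA₂
      · refine ⟨wc * A₁, hwA₁sec, ?_⟩
        rw [hevalrec, rel_not_connected hdelC, hgeom, hZm, hZν, hPν]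
        simp only [eval_zero, mul_zero, add_zero]
        linear_combination (z*(1-z)*z^(c-1)*wc) * hA₁


lemma three_ineq {x y w : ℝ} (hx : 2 < x) (hy : 2 < y) (hw : 2 < w)
    (h : 2*(x*y*w) ≤ x*y + w*x + w*y + 1) : False := by
  have p1 : 2*(x*y) ≤ x*y*w := by
    nlinarith [mul_le_mul_of_nonneg_left hw.le (show (0:ℝ) ≤ x*y by nlinarith)]
  have p2 : 2*(x*w) ≤ x*y*w := by
    nlinarith [mul_le_mul_of_nonneg_left hy.le (show (0:ℝ) ≤ x*w by nlinarith)]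
  have p3 : 2*(y*w) ≤ x*y*w := by
    nlinarith [mul_le_mul_of_nonneg_left hx.le (show (0:ℝ) ≤ y*w by nlinarith)]
  have q1 : 4 < x*y := by
    nlinarith [mul_nonneg (by linarith : (0:ℝ) ≤ x - 2) (by linarith : (0:ℝ) ≤ y - 2)]
  have q2 : 4 < x*w := by
    nlinarith [mul_nonneg (by linarith : (0:ℝ) ≤ x - 2) (by linarith : (0:ℝ) ≤ w - 2)]
  have q3 : 4 < y*w := by
    nlinarith [mul_nonneg (by linarith : (0:ℝ) ≤ y - 2) (by linarith : (0:ℝ) ≤ w - 2)]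
  linarith

lemma adj_class_pos (G : Multigraph) {x y t : G.V} (hxy : x ≠ y) (hxt : x ≠ t) (hyt : y ≠ t)
    (hall : ∀ z : G.V, z = x ∨ z = y ∨ z = t)
    (hcon : ((G.spanningGraph Set.univ).induce {s : G.V | s ≠ t}).Connected) :
    1 ≤ Fintype.card {e : G.E // G.ends e = s(x, y)} := by
  have hr := hcon.preconnected ⟨x, hxt⟩ ⟨y, hyt⟩
  rw [SimpleGraph.reachable_iff_reflTransGen] at hr
  rcases Relation.ReflTransGen.cases_head hr with heq | ⟨z1, hadj, -⟩
  · exact absurd (congrArg Subtype.val heq) hxy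
  · have hadj' : (G.spanningGraph Set.univ).Adj x z1.1 := hadj
    obtain ⟨hne, e, -, hends⟩ := hadj'
    rcases hall z1.1 with h | h | h
    · exact absurd h.symm hne
    · exact Fintype.card_pos_iff.mpr ⟨⟨e, by rw [hends, h]⟩⟩
    · exact absurd h z1.2

/-- If `G` is a 2-connected finite loopless multigraph on `n` vertices,
then every complex root `z` of the all-terminal reliability polynomial `Rel(G;q)`
satisfies `|z| ≤ n - 1`. -/
theorem atr_root_le_card_sub_one (G : Multigraph) (hG : G.TwoConnected)
    (z : ℂ) (hz : G.Rel.eval z = 0) :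
    ‖z‖ ≤ (Fintype.card G.V : ℝ) - 1 := by
  by_contra hlt
  push_neg at hlt
  obtain ⟨hconn, hcard3, hdel⟩ := hG
  rcases eq_or_lt_of_le hcard3 with h3 | h4
  · -- exactly three vertices
    have h3' : Fintype.card G.V = 3 := h3.symm
    have hU : (Finset.univ : Finset G.V).card = 3 := by rw [Finset.card_univ, h3']
    obtain ⟨u, v, w, huv, huw, hvw, hUniv⟩ := Finset.card_eq_three.mp hU
    have hall : ∀ x : G.V, x = u ∨ x = v ∨ x = w := by
      intro x
      have hx : x ∈ (Finset.univ : Finset G.V) := Finset.mem_univ x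
      rw [hUniv] at hx
      simpa using hx
    set a := Fintype.card {e : G.E // G.ends e = s(u, w)} with hadef
    set b := Fintype.card {e : G.E // G.ends e = s(v, w)} with hbdef
    set c := Fintype.card {e : G.E // G.ends e = s(u, v)} with hcdef
    have hc1 : 1 ≤ c := G.adj_class_pos huv huw hvw hall (hdel w)
    have ha1 : 1 ≤ a := G.adj_class_pos huw huv hvw.symm
      (fun t => by rcases hall t with h | h | h <;> tauto) (hdel v)
    have hb1 : 1 ≤ b := G.adj_class_pos hvw huv.symm huw.symm
      (fun t => by rcases hall t with h | h | h <;> tauto) (hdel u)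
    have h0 := congrArg (Polynomial.eval z) (G.rel_three u v w huv huw hvw hall)
    rw [hz] at h0
    simp only [eval_add, eval_mul, eval_sub, eval_pow, eval_one, eval_X] at h0
    have key : (2:ℂ) * (z^a * z^b * z^c) = z^a*z^b + z^c*z^a + z^c*z^b - 1 := by
      linear_combination -h0
    set r := ‖z‖ with hrdef
    have hr2 : 2 < r := by
      rw [h3'] at hlt
      push_cast at hlt
      linarith
    have hr1 : 1 ≤ r := by linarith
    have hA2 : 2 < r^a := lt_of_lt_of_le hr2 (le_self_pow₀ hr1 (by omega))
    have hB2 : 2 < r^b := lt_of_lt_of_le hr2 (le_self_pow₀ hr1 (by omega))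
    have hC2 : 2 < r^c := lt_of_lt_of_le hr2 (le_self_pow₀ hr1 (by omega))
    have hk := congrArg Norm.norm key
    rw [norm_mul, norm_mul, norm_mul, norm_pow, norm_pow, norm_pow] at hk
    simp only [← hrdef] at hk
    rw [Complex.norm_two] at hk
    have hbound : ‖z^a*z^b + z^c*z^a + z^c*z^b - 1‖ ≤ r^a*r^b + r^c*r^a + r^c*r^b + 1 := by
      calc ‖z^a*z^b + z^c*z^a + z^c*z^b - 1‖
          ≤ ‖z^a*z^b + z^c*z^a + z^c*z^b‖ + ‖(1:ℂ)‖ := norm_sub_le _ _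
        _ ≤ ‖z^a*z^b‖ + ‖z^c*z^a‖ + ‖z^c*z^b‖ + ‖(1:ℂ)‖ := by
            have h1 := norm_add_le (z^a*z^b + z^c*z^a) (z^c*z^b)
            have h2 := norm_add_le (z^a*z^b) (z^c*z^a)
            linarith
        _ = r^a*r^b + r^c*r^a + r^c*r^b + 1 := by
            simp only [norm_mul, norm_pow, norm_one, ← hrdef]
    have hfin : 2 * (r^a * r^b * r^c) ≤ r^a*r^b + r^c*r^a + r^c*r^b + 1 := by
      rw [hk]
      exact hbound
    exact three_ineq hA2 hB2 hC2 hfin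
  · -- at least four vertices
    have hn4 : 4 ≤ Fintype.card G.V := h4
    obtain ⟨A, hAsec, hA⟩ := main_aux (Fintype.card G.V) hn4 z hlt
      (Fintype.card G.E) G rfl hconn le_rfl
    rw [hz, mul_zero] at hA
    have habs3 : (3:ℝ) ≤ ‖z‖ := by
      have : (4:ℝ) ≤ (Fintype.card G.V : ℝ) := by exact_mod_cast hn4
      linarith
    have hz0 : z ≠ 0 := by
      intro h
      rw [h, norm_zero] at habs3
      norm_num at habs3
    have hz1 : (1:ℂ) - z ≠ 0 := by
      intro h
      have hz1' : z = 1 := by linear_combination -h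
      rw [hz1', norm_one] at habs3
      norm_num at habs3
    have hA0 : A = 0 := by
      rcases mul_eq_zero.mp hA.symm with h | h
      · rcases mul_eq_zero.mp h with h' | h'
        · exact absurd h' (pow_ne_zero _ hz0)
        · exact absurd h' (pow_ne_zero _ hz1)
      · exact h
    exact hAsec.1 hA0

end Multigraph
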